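/- arXiv:2204.00184 — 7 statements merged into one kernel-verified Lean document; each statement's English description precedes it below -/
import Mathlib

section
/- If F_m is a vertex multi-output filter that output simulates a filter F, then there exists a vertex single-output filter F_s that output simulates F and satisfies |V(F_m)| = |V(F_s)|. Concretely, F_s may be obtained from F_m by choosing, for each state, a single output arbitrarily from that state's output set. -/
/-- A procrustean filter with state type `V`, observation alphabet `Y`, and output set `C`:
initial states `V0`, transition labeling `tr`, and nonempty output sets `out`. -/
structure PFilter (V Y C : Type) where
  V0 : Set V
  tr : V → V → Set Y
  out : V → Set C
  out_ne : ∀ v, (out v).Nonempty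

namespace PFilter

variable {V V' V'' Y C : Type}

/-- One step of tracing: states reachable from some state of `S` along a `y`-labeled edge. -/
def step (F : PFilter V Y C) (S : Set V) (y : Y) : Set V :=
  {w | ∃ v ∈ S, y ∈ F.tr v w}

/-- `V_F(s)`: the set of states reached by the string `s` from some initial state. -/
def reached (F : PFilter V Y C) (s : List Y) : Set V :=
  s.foldl F.step F.V0

/-- The interaction language `L(F)`. -/
def lang (F : PFilter V Y C) : Set (List Y) :=
  {s | (F.reached s).Nonempty}

/-- `C_F(s)`: the set of outputs produced for a string `s`. -/
def outputs (F : PFilter V Y C) (s : List Y) : Set C :=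
  ⋃ w ∈ F.reached s, F.out w

/-- `F'` output simulates `F`: language inclusion and output compatibility. -/
def OutputSimulates (F' : PFilter V' Y C) (F : PFilter V Y C) : Prop :=
  F.lang ⊆ F'.lang ∧ ∀ s ∈ F.lang, F'.outputs s ⊆ F.outputs s

/-- Tracing-deterministic: one initial state and disjoint labels on departing edges. -/
def TracingDet (F : PFilter V Y C) : Prop :=
  (∃ v0 : V, F.V0 = {v0}) ∧
  ∀ v1 v2 v3 : V, v2 ≠ v3 → F.tr v1 v2 ∩ F.tr v1 v3 = ∅

/-- Vertex single-output: every state has exactly one output. -/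
def VertexSingle (F : PFilter V Y C) : Prop :=
  ∀ v : V, ∃ a : C, F.out v = {a}

/-- String single-output: every string in the language has exactly one output. -/
def StringSingle (F : PFilter V Y C) : Prop :=
  ∀ s ∈ F.lang, ∃ a : C, F.outputs s = {a}

/-- The tensor product of two filters (outputs taken from the first component;
only the transition structure matters for reachability statements). -/
def tensor (F : PFilter V Y C) (F' : PFilter V' Y C) : PFilter (V × V') Y C where
  V0 := F.V0 ×ˢ F'.V0
  tr p q := F.tr p.1 q.1 ∩ F'.tr p.2 q.2
  out p := F.out p.1
  out_ne p := F.out_ne p.1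

end PFilter

/-- A vertex multi-output simulator can be replaced by a vertex single-output
simulator on the same state set (hence with the same number of states), obtained by choosing a
single output from each state's output set. -/
theorem exists_vertexSingle_simulator {V Vm Y C : Type}
    (F : PFilter V Y C) (Fm : PFilter Vm Y C)
    (hmulti : ¬ Fm.VertexSingle) (hsim : Fm.OutputSimulates F) :
    ∃ Fs : PFilter Vm Y C, Fs.VertexSingle ∧ Fs.OutputSimulates F ∧
      Fs.V0 = Fm.V0 ∧ Fs.tr = Fm.tr ∧ ∀ w : Vm, Fs.out w ⊆ Fm.out w := by
  refine ⟨{ V0 := Fm.V0, tr := Fm.tr,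
            out := fun v => {(Fm.out_ne v).choose},
            out_ne := fun v => ⟨_, rfl⟩ }, ?_, ?_, rfl, rfl, ?_⟩
  · exact fun v => ⟨_, rfl⟩
  · constructor
    · exact hsim.1
    · intro s hs x hx
      apply hsim.2 s hs
      simp only [PFilter.outputs, PFilter.reached, Set.mem_iUnion] at hx ⊢
      obtain ⟨w, hw, hxw⟩ := hx
      exact ⟨w, hw, by simpa using hxw ▸ (Fm.out_ne w).choose_spec⟩
  · intro w x hx
    simp only [Set.mem_singleton_iff] at hx
    exact hx ▸ (Fm.out_ne w).choose_spec
end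

section
/- Characterization of string single-output filters via the self-product: a filter F' is string single-output if and only if (1) every state v' of F' satisfies |c(v')| = 1, and (2) for every pair of states (v1', v2') of the self-product G = F' ⊗ F' that is reached by some string from an initial state of G, the outputs agree: c(v1') = c(v2'). -/
namespace PFilter

variable {V V' V'' Y C : Type}

theorem tensor_step_prod (F : PFilter V Y C) (F' : PFilter V' Y C)
    (A : Set V) (B : Set V') (y : Y) :
    (F.tensor F').step (A ×ˢ B) y = (F.step A y) ×ˢ (F'.step B y) := by
  ext ⟨w1, w2⟩
  constructor
  · rintro ⟨⟨v1, v2⟩, ⟨hA, hB⟩, h1, h2⟩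
    exact ⟨⟨v1, hA, h1⟩, ⟨v2, hB, h2⟩⟩
  · rintro ⟨⟨v1, hA, h1⟩, ⟨v2, hB, h2⟩⟩
    exact ⟨⟨v1, v2⟩, ⟨hA, hB⟩, h1, h2⟩

theorem tensor_reached (F : PFilter V Y C) (F' : PFilter V' Y C) (s : List Y) :
    (F.tensor F').reached s = (F.reached s) ×ˢ (F'.reached s) := by
  unfold reached
  have : ∀ (A : Set V) (B : Set V'),
      s.foldl (F.tensor F').step (A ×ˢ B) = (s.foldl F.step A) ×ˢ (s.foldl F'.step B) := by
    induction s with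
    | nil => intro A B; rfl
    | cons y t ih => intro A B; simp only [List.foldl_cons, tensor_step_prod]; exact ih _ _
  exact this F.V0 F'.V0

end PFilter

/-- Characterization of string single-output filters via the self-product
(under the standing assumption that every state is reachable): `F'` is string single-output iff
every state has exactly one output and every pair of states of `F' ⊗ F'` reached by some string
from an initial state has agreeing outputs. -/
theorem stringSingle_iff_selfProduct {V' Y C : Type}
    (F' : PFilter V' Y C)
    (hreach : ∀ v : V', ∃ s : List Y, v ∈ F'.reached s) :
    F'.StringSingle ↔
      (F'.VertexSingle ∧
        ∀ v1 v2 : V', (∃ s : List Y, (v1, v2) ∈ (F'.tensor F').reached s) →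
          F'.out v1 = F'.out v2) := by
  constructor
  · intro hss
    have key : ∀ v : V', ∀ s : List Y, v ∈ F'.reached s → ∃ a, F'.outputs s = {a} ∧ F'.out v = {a} := by
      intro v s hv
      obtain ⟨a, ha⟩ := hss s ⟨v, hv⟩
      refine ⟨a, ha, ?_⟩
      have hsub : F'.out v ⊆ {a} := by
        rw [← ha]; intro c hc; exact Set.mem_biUnion hv hc
      obtain ⟨c, hc⟩ := F'.out_ne v
      have : c = a := hsub hc
      apply Set.Subset.antisymm hsub
      intro x hx; rw [Set.mem_singleton_iff] at hx; subst hx; rwa [← this]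
    constructor
    · intro v
      obtain ⟨s, hv⟩ := hreach v
      obtain ⟨a, _, h2⟩ := key v s hv
      exact ⟨a, h2⟩
    · rintro v1 v2 ⟨s, hs⟩
      rw [PFilter.tensor_reached] at hs
      obtain ⟨h1, h2⟩ := hs
      obtain ⟨a, ha, hv1⟩ := key v1 s h1
      obtain ⟨b, hb, hv2⟩ := key v2 s h2
      rw [ha] at hb
      rw [hv1, hv2, Set.singleton_eq_singleton_iff.mp hb]
  · rintro ⟨hvs, hpair⟩ s ⟨w, hw⟩
    obtain ⟨a, ha⟩ := hvs w
    refine ⟨a, ?_⟩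
    apply Set.Subset.antisymm
    · intro c hc
      obtain ⟨w', hw', hc'⟩ := Set.mem_iUnion₂.mp hc
      have : F'.out w' = F'.out w := by
        apply hpair w' w
        exact ⟨s, by rw [PFilter.tensor_reached]; exact ⟨hw', hw⟩⟩
      rw [this, ha] at hc'
      exact hc'
    · intro x hx
      rw [Set.mem_singleton_iff] at hx; subst hx
      exact Set.mem_biUnion hw (by rw [ha]; rfl)
end

section
/- Pointwise characterization of output compatibility for string single-output filters: let F and F' be string single-output filters (hence vertex single-output) with L(F) ⊆ L(F'). For each state v' of F', let R_{v'} = { v ∈ V(F) | (v, v') is reached by some string from an initial state of F ⊗ F' }. Then output compatibility — for every s ∈ L(F), C_{F'}(s) ⊆ C_F(s) — holds if and only if for every state v' of F' and every v ∈ R_{v'}, c(v) = c(v'). -/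
lemma tensor_step_prod {V V' Y C : Type} (F : PFilter V Y C) (F' : PFilter V' Y C)
    (A : Set V) (B : Set V') (y : Y) :
    (F.tensor F').step (A ×ˢ B) y = (F.step A y) ×ˢ (F'.step B y) := by
  ext ⟨w, w'⟩
  simp only [PFilter.step, PFilter.tensor, Set.mem_setOf_eq, Set.mem_prod, Set.mem_inter_iff]
  constructor
  · rintro ⟨⟨v, v'⟩, ⟨hv, hv'⟩, hy1, hy2⟩
    exact ⟨⟨v, hv, hy1⟩, ⟨v', hv', hy2⟩⟩
  · rintro ⟨⟨v, hv, hy1⟩, ⟨v', hv', hy2⟩⟩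
    exact ⟨⟨v, v'⟩, ⟨hv, hv'⟩, hy1, hy2⟩

lemma tensor_reached {V V' Y C : Type} (F : PFilter V Y C) (F' : PFilter V' Y C)
    (s : List Y) :
    (F.tensor F').reached s = (F.reached s) ×ˢ (F'.reached s) := by
  suffices h : ∀ (A : Set V) (B : Set V'),
      List.foldl (F.tensor F').step (A ×ˢ B) s = (List.foldl F.step A s) ×ˢ (List.foldl F'.step B s) by
    exact h F.V0 F'.V0
  induction s with
  | nil => intro A B; rfl
  | cons y t ih =>
    intro A B
    simp only [List.foldl_cons, tensor_step_prod, ih]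

/-- Pointwise characterization of output compatibility for string single-output
(hence vertex single-output) filters with `L(F) ⊆ L(F')`: output compatibility holds iff for
every state `v'` of `F'` and every `v ∈ R_{v'}` (the states of `F` paired with `v'` in some
reachable state of `F ⊗ F'`), the outputs of `v` and `v'` agree. -/
theorem outputCompat_iff_pointwise {V V' Y C : Type}
    (F : PFilter V Y C) (F' : PFilter V' Y C)
    (hF : F.StringSingle) (hF' : F'.StringSingle)
    (hFv : F.VertexSingle) (hF'v : F'.VertexSingle)
    (hL : F.lang ⊆ F'.lang) :
    (∀ s ∈ F.lang, F'.outputs s ⊆ F.outputs s) ↔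
      (∀ (v' : V') (v : V),
        v ∈ {v : V | ∃ s : List Y, (v, v') ∈ (F.tensor F').reached s} →
        F.out v = F'.out v') := by
  constructor
  · intro hcompat v' v hv
    obtain ⟨s, hs⟩ := hv
    rw [tensor_reached] at hs
    obtain ⟨hvF, hv'F⟩ := hs
    have hsl : s ∈ F.lang := ⟨v, hvF⟩
    obtain ⟨a, ha⟩ := hF s hsl
    obtain ⟨a', ha'⟩ := hF' s (hL hsl)
    obtain ⟨b, hb⟩ := hFv v
    obtain ⟨b', hb'⟩ := hF'v v'
    have h1 : b ∈ F.outputs s := Set.mem_biUnion hvF (by rw [hb]; rfl)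
    have h2 : b' ∈ F'.outputs s := Set.mem_biUnion hv'F (by rw [hb']; rfl)
    rw [ha] at h1; rw [ha'] at h2
    have h3 : a' ∈ F.outputs s := hcompat s hsl (by rw [ha']; rfl)
    rw [ha] at h3
    rw [hb, hb', h1, h2, h3]
  · intro hpt s hs c hc
    obtain ⟨v', hv', hcv'⟩ := Set.mem_iUnion₂.1 hc
    obtain ⟨v, hv⟩ := hs
    have : (v, v') ∈ (F.tensor F').reached s := by
      rw [tensor_reached]; exact ⟨hv, hv'⟩
    have h := hpt v' v ⟨s, this⟩
    exact Set.mem_biUnion hv (h ▸ hcv')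
end

section
/- Reduction of language universality to output simulation: let F' be any filter over alphabet Σ in which every state has the single output c0, and let F be the tracing-deterministic filter with a single initial state colored c0 carrying a self-loop bearing every symbol of Σ (so L(F) = Σ*). Then F' output simulates F if and only if L(F') = Σ*. -/
namespace PFilter

variable {V V' Y C : Type}

theorem foldl_step_eq_of_forall_step_eq (F : PFilter V Y C) {S : Set V}
    (hS : ∀ y, F.step S y = S) (s : List Y) : s.foldl F.step S = S := by
  induction s with
  | nil => rfl
  | cons y t ih => rw [List.foldl_cons, hS, ih]

theorem outputs_subset_of_forall_out_eq (F : PFilter V Y C) {c0 : C}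
    (hout : ∀ v, F.out v = {c0}) (s : List Y) : F.outputs s ⊆ {c0} :=
  Set.iUnion₂_subset fun v _ => (hout v).subset

theorem outputSimulates_iff_of_lang_eq_univ (F' : PFilter V' Y C) {F : PFilter V Y C}
    (hF : F.lang = Set.univ) :
    F'.OutputSimulates F ↔ F'.lang = Set.univ ∧ ∀ s, F'.outputs s ⊆ F.outputs s := by
  simp [OutputSimulates, hF, Set.univ_subset_iff]

def universal (c0 : C) : PFilter PUnit Y C :=
  ⟨{PUnit.unit}, fun _ _ => Set.univ, fun _ => {c0}, fun _ => ⟨c0, rfl⟩⟩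

theorem universal_reached (c0 : C) (s : List Y) :
    (universal c0 : PFilter PUnit Y C).reached s = {PUnit.unit} := by
  refine foldl_step_eq_of_forall_step_eq _ (fun y => ?_) s
  ext
  simp [step, universal]

theorem universal_lang (c0 : C) : (universal c0 : PFilter PUnit Y C).lang = Set.univ := by
  simp [lang, universal_reached]

theorem universal_outputs (c0 : C) (s : List Y) :
    (universal c0 : PFilter PUnit Y C).outputs s = {c0} := by
  simp only [outputs, universal_reached]
  simp [universal]

end PFilter

/-- Reduction of language universality to output simulation: if every state of `F'`
has the single output `c0`, and `F` is the one-state tracing-deterministic filter whose single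
state is colored `c0` and carries a self-loop on every symbol (so `L(F) = Σ*`), then `F'` output
simulates `F` iff `L(F')` is all of `Σ*`. -/
theorem outputSimulates_universal_iff {V' Y C : Type}
    (F' : PFilter V' Y C) (c0 : C)
    (hout : ∀ v : V', F'.out v = {c0}) :
    F'.OutputSimulates
      (⟨{PUnit.unit}, fun _ _ => (Set.univ : Set Y), fun _ => {c0},
        fun _ => ⟨c0, rfl⟩⟩ : PFilter PUnit Y C)
      ↔ F'.lang = Set.univ := by
  change F'.OutputSimulates (PFilter.universal c0) ↔ _
  rw [F'.outputSimulates_iff_of_lang_eq_univ (PFilter.universal_lang c0)]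
  simp only [PFilter.universal_outputs]
  exact and_iff_left (F'.outputs_subset_of_forall_out_eq hout)
end

section
/- Reduction of language inclusion to output compatibility: let A and B be filters over a common alphabet. Let J = A ⊗ B be their tensor product with every state colored green, let G be the disjoint union of J and a copy of A in which every state is colored red (so L(G) = L(A)), and let F' be a copy of A with every state colored green (so L(F') = L(A) = L(G)). Then L(A) ⊆ L(B) holds if and only if the output compatibility condition holds: for every string s ∈ L(G), C_{F'}(s) ⊆ C_G(s). -/
/-- Two colors: green and red. -/
inductive Color : Type
  | green : Color
  | red : Color

/-- `G`: the disjoint union of `J = A ⊗ B` (every state colored green) with a copy of `A`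
(every state colored red). -/
def unionFilter {VA VB Y C : Type} (A : PFilter VA Y C) (B : PFilter VB Y C) :
    PFilter ((VA × VB) ⊕ VA) Y Color where
  V0 := Sum.inl '' (A.V0 ×ˢ B.V0) ∪ Sum.inr '' A.V0
  tr p q :=
    match p, q with
    | Sum.inl (v, v'), Sum.inl (w, w') => A.tr v w ∩ B.tr v' w'
    | Sum.inr v, Sum.inr w => A.tr v w
    | _, _ => ∅
  out p :=
    match p with
    | Sum.inl _ => {Color.green}
    | Sum.inr _ => {Color.red}
  out_ne p := by cases p with
    | inl _ => exact ⟨Color.green, rfl⟩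
    | inr _ => exact ⟨Color.red, rfl⟩

/-- `F'`: a copy of `A` with every state colored green. -/
def greenCopy {VA Y C : Type} (A : PFilter VA Y C) : PFilter VA Y Color where
  V0 := A.V0
  tr := A.tr
  out _ := {Color.green}
  out_ne _ := ⟨Color.green, rfl⟩

/-! Tracing `s` through `G` reaches `(V_A(s) × V_B(s)) ⊕ V_A(s)`, so `green ∈ C_G(s)` exactly
when `s ∈ L(A) ∩ L(B)`, while `C_{F'}(s) = {green}` for every `s ∈ L(A) = L(G)`. Output
compatibility therefore says precisely that every string of `L(A)` lies in `L(B)`. -/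

namespace PFilter

variable {V V' Y C : Type}

theorem step_tensor (F : PFilter V Y C) (F' : PFilter V' Y C) (S : Set V) (S' : Set V') (y : Y) :
    (F.tensor F').step (S ×ˢ S') y = F.step S y ×ˢ F'.step S' y := by
  ext ⟨w, w'⟩
  constructor
  · rintro ⟨⟨v, v'⟩, ⟨hv, hv'⟩, hy, hy'⟩
    exact ⟨⟨v, hv, hy⟩, v', hv', hy'⟩
  · rintro ⟨⟨v, hv, hy⟩, v', hv', hy'⟩
    exact ⟨(v, v'), ⟨hv, hv'⟩, hy, hy'⟩

theorem reached_tensor (F : PFilter V Y C) (F' : PFilter V' Y C) (s : List Y) :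
    (F.tensor F').reached s = F.reached s ×ˢ F'.reached s := by
  suffices ∀ S S',
      s.foldl (F.tensor F').step (S ×ˢ S') = s.foldl F.step S ×ˢ s.foldl F'.step S'
    from this F.V0 F'.V0
  induction s with
  | nil => exact fun _ _ => rfl
  | cons y s ih => exact fun S S' => by rw [List.foldl_cons, step_tensor, ih]; rfl

theorem lang_tensor (F : PFilter V Y C) (F' : PFilter V' Y C) :
    (F.tensor F').lang = F.lang ∩ F'.lang :=
  Set.ext fun s => by
    simp only [lang, Set.mem_ofPred_eq, reached_tensor, Set.prod_nonempty_iff]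
    rfl

end PFilter

section unionFilter

open PFilter

variable {VA VB Y C : Type} (A : PFilter VA Y C) (B : PFilter VB Y C)

theorem step_unionFilter (S : Set (VA × VB)) (S' : Set VA) (y : Y) :
    (unionFilter A B).step (Sum.inl '' S ∪ Sum.inr '' S') y
      = Sum.inl '' (A.tensor B).step S y ∪ Sum.inr '' A.step S' y := by
  ext (⟨w, w'⟩ | w) <;> simp [step, unionFilter, tensor, Sum.exists]

theorem reached_unionFilter (s : List Y) :
    (unionFilter A B).reached s
      = Sum.inl '' (A.tensor B).reached s ∪ Sum.inr '' A.reached s := by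
  suffices ∀ S S', s.foldl (unionFilter A B).step (Sum.inl '' S ∪ Sum.inr '' S')
      = Sum.inl '' s.foldl (A.tensor B).step S ∪ Sum.inr '' s.foldl A.step S'
    from this (A.V0 ×ˢ B.V0) A.V0
  induction s with
  | nil => exact fun _ _ => rfl
  | cons y s ih => exact fun S S' => by rw [List.foldl_cons, step_unionFilter, ih]; rfl

theorem lang_unionFilter : (unionFilter A B).lang = A.lang :=
  Set.ext fun s => by
    simp only [lang, Set.mem_ofPred_eq, reached_unionFilter, Set.union_nonempty,
      Set.image_nonempty, reached_tensor, Set.prod_nonempty_iff]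
    exact or_iff_right_of_imp And.left

theorem green_mem_outputs_unionFilter_iff (s : List Y) :
    Color.green ∈ (unionFilter A B).outputs s ↔ s ∈ (A.tensor B).lang := by
  simp only [outputs, reached_unionFilter]
  simp [lang, unionFilter, Set.Nonempty]

theorem outputs_greenCopy {s : List Y} (hs : s ∈ A.lang) :
    (greenCopy A).outputs s = {Color.green} :=
  Set.biUnion_const hs _

end unionFilter

/-- Reduction of language inclusion to output compatibility:
`L(A) ⊆ L(B)` iff for every `s ∈ L(G)`, `C_{F'}(s) ⊆ C_G(s)`. -/
theorem langIncl_iff_outputCompat {VA VB Y C : Type}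
    (A : PFilter VA Y C) (B : PFilter VB Y C) :
    A.lang ⊆ B.lang ↔
      ∀ s ∈ (unionFilter A B).lang,
        (greenCopy A).outputs s ⊆ (unionFilter A B).outputs s := by
  rw [lang_unionFilter]
  refine forall₂_congr fun s hs => ?_
  rw [outputs_greenCopy A hs, Set.singleton_subset_iff, green_mem_outputs_unionFilter_iff,
    PFilter.lang_tensor]
  exact (and_iff_right hs).symm
end

section
/- Adding a self-loop to a chain preserves output simulation in the unitary-alphabet case: let F be a filter with alphabet Y(F) = {y}, and let F' be a tracing-deterministic filter over {y} that is a finite chain of states (no cycle) and output simulates F. Then the filter F'' obtained from F' by adding a y-labeled self-loop at the last state of the chain still output simulates F and has the same number of states as F'. -/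
/-- Adding a `y`-labeled self-loop at the last state of a chain-shaped
tracing-deterministic output simulator over the unitary alphabet `{y}` preserves output
simulation (the states are unchanged, so the number of states is the same). -/
theorem chain_selfLoop_outputSimulates {V Y C : Type}
    (F : PFilter V Y C) (y : Y) (hY : ∀ z : Y, z = y)
    (n : ℕ) (hn : 0 < n) (F' : PFilter (Fin n) Y C)
    (hdet : F'.TracingDet)
    (hV0 : F'.V0 = {⟨0, hn⟩})
    (hchain : ∀ i k : Fin n,
      F'.tr i k = if (k : ℕ) = (i : ℕ) + 1 then ({y} : Set Y) else ∅)
    (hsim : F'.OutputSimulates F) :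
    PFilter.OutputSimulates
      (⟨F'.V0,
        fun i k => if (i : ℕ) = n - 1 ∧ k = i then insert y (F'.tr i k) else F'.tr i k,
        F'.out, F'.out_ne⟩ : PFilter (Fin n) Y C) F := by
  classical
  obtain ⟨hL, hO⟩ := hsim
  set F'' : PFilter (Fin n) Y C :=
    (⟨F'.V0,
      fun i k => if (i : ℕ) = n - 1 ∧ k = i then insert y (F'.tr i k) else F'.tr i k,
      F'.out, F'.out_ne⟩ : PFilter (Fin n) Y C) with hF''
  have hmem : ∀ (v w : Fin n) (z : Y), z ∈ F'.tr v w ↔ (w:ℕ) = (v:ℕ)+1 := by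
    intro v w z
    rw [hY z, hchain]
    by_cases h : (w:ℕ) = (v:ℕ)+1 <;> simp [h]
  have hmem'' : ∀ (v w : Fin n) (z : Y),
      z ∈ F''.tr v w ↔ (((v:ℕ) = n - 1 ∧ w = v) ∨ (w:ℕ) = (v:ℕ)+1) := by
    intro v w z
    rw [hY z]
    show y ∈ (if (v : ℕ) = n - 1 ∧ w = v then insert y (F'.tr v w) else F'.tr v w) ↔ _
    by_cases h : (v:ℕ) = n - 1 ∧ w = v
    · simp [h]
    · simp [h, hmem v w y]
  have hA : ∀ s : List Y, F'.reached s = {i : Fin n | (i:ℕ) = s.length} := by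
    intro s
    induction s using List.reverseRecOn with
    | nil =>
      show F'.V0 = _
      rw [hV0]; ext i
      simp [Fin.ext_iff, eq_comm]
    | append_singleton s z ih =>
      show (s ++ [z]).foldl F'.step F'.V0 = _
      rw [List.foldl_append]
      have hih : s.foldl F'.step F'.V0 = {i : Fin n | (i:ℕ) = s.length} := ih
      rw [hih]
      ext w
      constructor
      · rintro ⟨v, hv, hz⟩
        rw [hmem v w z] at hz
        simp only [Set.mem_setOf_eq] at hv ⊢
        simp [hz, hv]
      · intro hw
        simp only [Set.mem_setOf_eq, List.length_append, List.length_singleton] at hw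
        have hlt := w.isLt
        have hlen : s.length < n := by omega
        refine ⟨⟨s.length, hlen⟩, rfl, ?_⟩
        rw [hmem]
        show (w:ℕ) = s.length + 1
        omega
  have hB : ∀ s : List Y, F''.reached s = {i : Fin n | (i:ℕ) = min s.length (n-1)} := by
    intro s
    induction s using List.reverseRecOn with
    | nil =>
      show F'.V0 = _
      rw [hV0]; ext i
      simp [Fin.ext_iff, eq_comm, Nat.min_eq_left (Nat.zero_le _)]
    | append_singleton s z ih =>
      show (s ++ [z]).foldl F''.step F''.V0 = _
      rw [List.foldl_append]
      have hih : s.foldl F''.step F''.V0 = {i : Fin n | (i:ℕ) = min s.length (n-1)} := ih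
      rw [hih]
      ext w
      constructor
      · rintro ⟨v, hv, hz⟩
        rw [hmem'' v w z] at hz
        simp only [Set.mem_setOf_eq] at hv ⊢
        have hlt := w.isLt
        simp only [List.length_append, List.length_singleton]
        rcases hz with ⟨h1, rfl⟩ | h2
        · omega
        · omega
      · intro hw
        simp only [Set.mem_setOf_eq, List.length_append, List.length_singleton] at hw
        have hlt := w.isLt
        refine ⟨⟨min s.length (n-1), by omega⟩, rfl, ?_⟩
        rw [hmem'']
        by_cases h : s.length < n - 1
        · right
          show (w:ℕ) = min s.length (n-1) + 1
          omega
        · left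
          refine ⟨?_, Fin.ext ?_⟩
          · show min s.length (n-1) = n - 1
            omega
          · show (w:ℕ) = min s.length (n-1)
            omega
  constructor
  · intro s _
    refine ⟨⟨min s.length (n-1), by omega⟩, ?_⟩
    rw [hB]
    exact rfl
  · intro s hs
    have hlen : s.length < n := by
      obtain ⟨w, hw⟩ := hL hs
      rw [hA] at hw
      have := w.isLt
      simp only [Set.mem_setOf_eq] at hw
      omega
    have heq : F''.reached s = F'.reached s := by
      rw [hA, hB]
      have hm : min s.length (n-1) = s.length := by omega
      rw [hm]
    have hout : F''.outputs s = F'.outputs s := by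
      unfold PFilter.outputs
      rw [heq]
    rw [hout]
    exact hO s hs
end

section
/- For a tracing-deterministic filter over a unitary alphabet, nondeterminism gives no size advantage: if F is a tracing-deterministic filter with |Y(F)| = 1, then there exists a tracing-deterministic filter F† that output simulates F such that no filter whatsoever (tracing-deterministic or tracing-nondeterministic) with fewer states than F† output simulates F. -/
/-!
Over a one-letter alphabet a string is determined by its length. Follow a longest run of a
simulator `G`, capped at `card W` steps. If it has `card W` steps it revisits a state, and the
lasso that walks the run up to the repetition and then loops is a tracing-deterministic filter
with at most `card W` states; otherwise `G` has no longer run and the line along the run will do.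
Each state of the lasso or line maps to a state of `G` reached by the same strings, so it output
simulates `G`, hence `F`. So a smallest tracing-deterministic simulator of `F` (one exists:
take `G = F`) is no larger than any simulator.
-/

theorem exists_le_lt_card_apply_eq_apply_succ {W : Type} [Fintype W] (w : ℕ → W) :
    ∃ i n, i ≤ n ∧ n < Fintype.card W ∧ w i = w (n + 1) := by
  obtain ⟨a, b, hab, he⟩ := Fintype.exists_ne_map_eq_of_card_lt
    (fun t : Fin (Fintype.card W + 1) => w t) (by simp)
  rcases Fin.lt_or_lt_of_ne hab with h | h
  · obtain ⟨n, hn⟩ : ∃ n, (b : ℕ) = n + 1 := ⟨b - 1, by omega⟩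
    exact ⟨a, n, by omega, by omega, hn ▸ he⟩
  · obtain ⟨n, hn⟩ : ∃ n, (a : ℕ) = n + 1 := ⟨a - 1, by omega⟩
    exact ⟨b, n, by omega, by omega, hn ▸ he.symm⟩

namespace PFilter

variable {V W Y C : Type}

theorem reached_append (F : PFilter V Y C) (s t : List Y) :
    F.reached (s ++ t) = t.foldl F.step (F.reached s) :=
  List.foldl_append

theorem reached_concat (F : PFilter V Y C) (s : List Y) (z : Y) :
    F.reached (s ++ [z]) = F.step (F.reached s) z :=
  F.reached_append s [z]

theorem foldl_step_empty (F : PFilter V Y C) (t : List Y) : t.foldl F.step ∅ = ∅ := by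
  induction t with
  | nil => rfl
  | cons z t ih => simpa [step] using ih

theorem mem_lang_of_append_mem_lang (F : PFilter V Y C) {s t : List Y}
    (h : s ++ t ∈ F.lang) : s ∈ F.lang := by
  by_contra hs
  have hs' : F.reached s = ∅ := Set.not_nonempty_iff_eq_empty.mp hs
  have h' : (F.reached (s ++ t)).Nonempty := h
  rw [reached_append, hs', foldl_step_empty] at h'
  exact Set.not_nonempty_empty h'

theorem lang_eq_univ_of_forall_exists_tr (F : PFilter V Y C) (h0 : F.V0.Nonempty)
    (htot : ∀ v z, ∃ w, z ∈ F.tr v w) : F.lang = Set.univ := by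
  refine Set.eq_univ_of_forall fun s => ?_
  induction s using List.reverseRecOn with
  | nil => exact h0
  | append_singleton s z ih =>
    obtain ⟨v, hv⟩ := ih
    obtain ⟨w, hw⟩ := htot v z
    exact ⟨w, by rw [reached_concat]; exact ⟨v, hv, hw⟩⟩

theorem mapsTo_reached {D : PFilter V Y C} {G : PFilter W Y C} {φ : V → W}
    (h0 : Set.MapsTo φ D.V0 G.V0) (htr : ∀ a b, D.tr a b ⊆ G.tr (φ a) (φ b)) (s : List Y) :
    Set.MapsTo φ (D.reached s) (G.reached s) := by
  induction s using List.reverseRecOn with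
  | nil => exact h0
  | append_singleton s z ih =>
    intro b hb
    rw [reached_concat] at hb ⊢
    obtain ⟨a, ha, hz⟩ := hb
    exact ⟨φ a, ih ha, htr a b hz⟩

theorem outputs_subset_of_hom {D : PFilter V Y C} {G : PFilter W Y C} {φ : V → W}
    (h0 : Set.MapsTo φ D.V0 G.V0) (htr : ∀ a b, D.tr a b ⊆ G.tr (φ a) (φ b))
    (hout : ∀ a, D.out a ⊆ G.out (φ a)) (s : List Y) :
    D.outputs s ⊆ G.outputs s :=
  Set.iUnion₂_subset fun a ha =>
    (hout a).trans (Set.subset_biUnion_of_mem (mapsTo_reached h0 htr s ha))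

theorem OutputSimulates.trans {V'' : Type} {D : PFilter V'' Y C} {G : PFilter W Y C}
    {F : PFilter V Y C} (hDG : D.OutputSimulates G) (hGF : G.OutputSimulates F) :
    D.OutputSimulates F :=
  ⟨hGF.1.trans hDG.1, fun s hs => (hDG.2 s (hGF.1 hs)).trans (hGF.2 s hs)⟩

theorem reached_replicate_nonempty_of_le (G : PFilter W Y C) (y : Y) {k l : ℕ} (hlk : l ≤ k)
    (h : (G.reached (List.replicate k y)).Nonempty) :
    (G.reached (List.replicate l y)).Nonempty := by
  obtain ⟨d, rfl⟩ := Nat.exists_eq_add_of_le hlk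
  rw [List.replicate_add] at h
  exact G.mem_lang_of_append_mem_lang h

theorem exists_path_of_mem_reached (G : PFilter W Y C) (y : Y) {k : ℕ} {u : W}
    (hu : u ∈ G.reached (List.replicate k y)) :
    ∃ w : ℕ → W, w 0 ∈ G.V0 ∧ (∀ t < k, y ∈ G.tr (w t) (w (t + 1))) ∧ w k = u := by
  induction k generalizing u with
  | zero => exact ⟨fun _ => u, hu, by simp, rfl⟩
  | succ k ih =>
    rw [List.replicate_succ', reached_concat] at hu
    obtain ⟨u', hu', hedge⟩ := hu
    obtain ⟨w, h0, hpath, rfl⟩ := ih hu'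
    refine ⟨fun t => if t ≤ k then w t else u, by simpa using h0, fun t ht => ?_, by simp⟩
    rcases Nat.lt_or_eq_of_le (Nat.lt_succ_iff.mp ht) with ht | rfl
    · simpa [ht.le, Nat.succ_le_of_lt ht] using hpath t ht
    · simpa using hedge

/-- States `0 → 1 → ⋯ → n`, followed by an optional edge from `n` back to `back`; every edge
carries every letter. -/
def chain (n : ℕ) (back : Option (Fin (n + 1))) (o : Fin (n + 1) → Set C)
    (ho : ∀ a, (o a).Nonempty) : PFilter (Fin (n + 1)) Y C where
  V0 := {0}
  tr a b := {_z | a.val + 1 = b.val ∨ (a = Fin.last n ∧ b ∈ back)}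
  out := o
  out_ne := ho

section Chain

variable {n : ℕ} {back : Option (Fin (n + 1))} {o : Fin (n + 1) → Set C}
  {ho : ∀ a, (o a).Nonempty}

theorem chain_tracingDet : (chain (Y := Y) n back o ho).TracingDet := by
  refine ⟨⟨0, rfl⟩, fun a b c hbc =>
    Set.eq_empty_of_forall_notMem fun z ⟨hb, hc⟩ => hbc ?_⟩
  simp only [chain, Set.mem_ofPred_eq] at hb hc
  rcases hb with hb | ⟨rfl, hb⟩ <;> rcases hc with hc | ⟨ha, hc⟩
  · exact Fin.ext (hb.symm.trans hc)
  · simp [ha] at hb; omega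
  · simp at hc; omega
  · exact Option.some_injective _ (hb.symm.trans hc)

theorem mem_reached_chain (s : List Y) (hs : s.length ≤ n) :
    ⟨s.length, Nat.lt_succ_of_le hs⟩ ∈ (chain n back o ho).reached s := by
  induction s using List.reverseRecOn with
  | nil => rfl
  | append_singleton s z ih =>
    rw [reached_concat]
    simp only [List.length_append, List.length_singleton] at hs
    exact ⟨_, ih (by omega), Or.inl (by simp)⟩

theorem chain_lang_eq_univ {i : Fin (n + 1)} : (chain (Y := Y) n (some i) o ho).lang = Set.univ :=
  lang_eq_univ_of_forall_exists_tr _ ⟨0, rfl⟩ fun a _ =>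
    if h : a = Fin.last n then ⟨i, Or.inr ⟨h, rfl⟩⟩
    else ⟨a + 1, Or.inl (by simp [Fin.val_add_one, h])⟩

theorem chain_outputs_subset (G : PFilter W Y C) (w : ℕ → W) (h0 : w 0 ∈ G.V0)
    (hpath : ∀ t < n, ∀ z, z ∈ G.tr (w t) (w (t + 1)))
    (hback : ∀ i ∈ back, ∀ z, z ∈ G.tr (w n) (w i)) (s : List Y) :
    (chain n back (fun a => G.out (w a)) fun _ => G.out_ne _).outputs s ⊆ G.outputs s := by
  apply outputs_subset_of_hom (φ := fun a : Fin (n + 1) => w a)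
  · rintro _ rfl
    exact h0
  · rintro a b z (hab | ⟨rfl, hb⟩)
    · rw [← hab]
      exact hpath a (by omega) z
    · exact hback b hb z
  · exact fun _ => subset_rfl

end Chain

theorem exists_tracingDet_outputSimulates_card_le [Fintype W] (G : PFilter W Y C) (y : Y)
    (hY : ∀ z : Y, z = y) (hG0 : G.V0.Nonempty) :
    ∃ k ≤ Fintype.card W, ∃ D : PFilter (Fin k) Y C,
      D.TracingDet ∧ D.OutputSimulates G := by
  classical
  have hletter : ∀ {a b : W}, y ∈ G.tr a b → ∀ z, z ∈ G.tr a b := fun h z => hY z ▸ h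
  -- `L` is the length of the longest run of `G`, capped at `m = card W`.
  set m := Fintype.card W
  set P : ℕ → Prop := fun k => (G.reached (List.replicate k y)).Nonempty
  set L := Nat.findGreatest P m
  obtain ⟨u, hu⟩ : P L := Nat.findGreatest_spec (Nat.zero_le m) hG0
  obtain ⟨w, h0, hpath, -⟩ := G.exists_path_of_mem_reached y hu
  by_cases hLm : L = m
  · -- A run of length `card W` revisits a state: follow it up to the repetition, then loop.
    obtain ⟨i, n, hin, hnm, hw⟩ := exists_le_lt_card_apply_eq_apply_succ w
    refine ⟨n + 1, hnm, chain n (some ⟨i, by omega⟩) _ _, chain_tracingDet,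
      by simp only [chain_lang_eq_univ, Set.subset_univ],
      fun s _ => chain_outputs_subset G w h0 (fun t ht => hletter (hpath t (by omega))) ?_ s⟩
    intro j hj
    obtain rfl := Option.mem_some_iff.mp hj
    simpa [hw] using hletter (hpath n (by omega))
  · -- Otherwise `G` has no run longer than `L`.
    have hLlt : L < m := lt_of_le_of_ne (Nat.findGreatest_le m) hLm
    refine ⟨L + 1, hLlt, chain L none _ _, chain_tracingDet, fun s hs => ?_,
      fun s _ => chain_outputs_subset G w h0 (fun t ht => hletter (hpath t ht)) (by simp) s⟩
    have hsL : s.length ≤ L := by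
      have hs' : (G.reached (List.replicate s.length y)).Nonempty := by
        rwa [← List.eq_replicate_of_mem fun z _ => hY z]
      have : min s.length m ≤ L := Nat.le_findGreatest (min_le_right _ _)
        (G.reached_replicate_nonempty_of_le y (min_le_left _ _) hs')
      omega
    exact ⟨_, mem_reached_chain s hsL⟩

end PFilter

theorem unitary_no_nondeterministic_advantage_general {V Y C : Type} [Fintype V]
    (F : PFilter V Y C) (y : Y) (hY : ∀ z : Y, z = y)
    (hdet : F.TracingDet) :
    ∃ (n : ℕ) (Fdag : PFilter (Fin n) Y C),
      Fdag.TracingDet ∧ Fdag.OutputSimulates F ∧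
      ∀ (W : Type) [Fintype W] (G : PFilter W Y C),
        G.OutputSimulates F → n ≤ Fintype.card W := by
  classical
  have hF0 : F.V0.Nonempty := by
    obtain ⟨v0, hv0⟩ := hdet.1
    exact hv0 ▸ Set.singleton_nonempty v0
  have hex : ∃ n, ∃ D : PFilter (Fin n) Y C, D.TracingDet ∧ D.OutputSimulates F := by
    obtain ⟨n, -, hD⟩ := F.exists_tracingDet_outputSimulates_card_le y hY hF0
    exact ⟨n, hD⟩
  obtain ⟨Fdag, hFdag, hsim⟩ := Nat.find_spec hex
  refine ⟨Nat.find hex, Fdag, hFdag, hsim, fun W _ G hG => ?_⟩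
  have hG0 : [] ∈ G.lang := hG.1 (hF0 : [] ∈ F.lang)
  obtain ⟨k, hk, D, hD, hDG⟩ := G.exists_tracingDet_outputSimulates_card_le y hY hG0
  exact (Nat.find_min' hex ⟨D, hD, hDG.trans hG⟩).trans hk

/-- For a tracing-deterministic filter over a unitary alphabet, nondeterminism
gives no size advantage: there is a tracing-deterministic output simulator `F†` such that no
filter whatsoever with fewer states output simulates `F`. -/
theorem unitary_no_nondeterministic_advantage {V Y C : Type} [Fintype V] [Nonempty V]
    (F : PFilter V Y C) (y : Y) (hY : ∀ z : Y, z = y)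
    (hdet : F.TracingDet) :
    ∃ (n : ℕ) (Fdag : PFilter (Fin n) Y C),
      Fdag.TracingDet ∧ Fdag.OutputSimulates F ∧
      ∀ (W : Type) [Fintype W] (G : PFilter W Y C),
        G.OutputSimulates F → n ≤ Fintype.card W :=
  unitary_no_nondeterministic_advantage_general F y hY hdet
end
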